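/- The q-Stirling number of the first kind satisfies c_q[n,k] = Σ_{T ∈ A(n, n−k)} q^{s(T)} · (1+q)^{r(T)}, where A(n, n−k) is the set of placements of n−k rooks, no two in the same column, on the shaded squares of the staircase board of length n (shading every other antidiagonal starting with the lowest); s(T) is the number of squares below the rooks and r(T) is the number of rooks not in the first row. -/

import Mathlib

/-!
Deleting the first (tallest) column of the staircase board of length `n + 1` leaves the staircase
board of length `n`. A rook in that column with `b` squares below it is shaded iff `b` is even and
then weighs `q^b (1 + q)`, or just `q^b` in the first row `b = n - 1`; these weights cover each of
`1, q, …, q^(n-1)` exactly once, so they add up to `[n]_q`. Hence the shaded rook polynomials obey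
the recursion `c_q[n+1, k+1] = c_q[n, k] + [n]_q c_q[n, k+1]`, and the boundary values agree.
-/

open scoped Classical
open Polynomial

/-- Rook placements of `n` rooks, no two in the same column, on the staircase board of
length `m` (column `c`, indexed from the left starting at `0`, has `m - 1 - c` squares).
`f c = 0` means column `c` is empty, and `f c = b + 1` means column `c` carries a rook
with `b` squares below it. -/
def Rooks (m n : ℕ) : Finset (Fin (m - 1) → Fin m) :=
  Finset.univ.filter fun f =>
    (∀ c, (f c : ℕ) ≤ m - 1 - (c : ℕ)) ∧
    (Finset.univ.filter fun c => (f c : ℕ) ≠ 0).card = n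

/-- The total number of squares strictly below the rooks of the placement `f`. -/
def rbelow {m : ℕ} (f : Fin (m - 1) → Fin m) : ℕ := ∑ c, ((f c : ℕ) - 1)

/-- The (unsigned) `q`-Stirling numbers of the first kind:
`c_q[n,k] = c_q[n-1,k-1] + [n-1]_q ⬝ c_q[n-1,k]`, `c_q[n,0] = δ_{n,0}`. -/
noncomputable def cq : ℕ → ℕ → Polynomial ℤ
  | 0, 0 => 1
  | 0, _ + 1 => 0
  | _ + 1, 0 => 0
  | n + 1, k + 1 => cq n k + (∑ i ∈ Finset.range n, X ^ i) * cq n (k + 1)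

/-- Placements in `Rooks m n` in which every rook lies on a shaded square of the
alternately shaded staircase board: a square is shaded exactly when the number of
squares below it in its column is even. -/
def ShadedRooks (m n : ℕ) : Finset (Fin (m - 1) → Fin m) :=
  (Rooks m n).filter fun f => ∀ c, (f c : ℕ) ≠ 0 → Even ((f c : ℕ) - 1)

/-- The number of rooks of the placement `f` that are not in the first row
(the first-row square of column `c` is the one with `m - 2 - c` squares below it). -/
def nrow {m : ℕ} (f : Fin (m - 1) → Fin m) : ℕ :=
  (Finset.univ.filter fun c =>
    (f c : ℕ) ≠ 0 ∧ (f c : ℕ) ≠ m - 1 - (c : ℕ)).card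

open Finset

theorem sum_range_ite_even_pow_mul_add {R : Type*} [Semiring R] (x : R) (p : ℕ) :
    ∑ b ∈ range p, (if Even b then x ^ b * (1 + x) else 0) + (if Even p then x ^ p else 0) =
      ∑ i ∈ range (p + 1), x ^ i := by
  induction p with
  | zero => simp
  | succ p ih =>
    rw [sum_range_succ, sum_range_succ _ (p + 1), ← ih]
    rcases Nat.even_or_odd p with hp | hp
    · simp [hp, Nat.even_add_one, mul_add, pow_succ]
      abel
    · simp [Nat.not_even_iff_odd.2 hp, hp]

noncomputable def rookWeight {m : ℕ} (f : Fin (m - 1) → Fin m) : ℤ[X] :=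
  X ^ rbelow f * (1 + X) ^ nrow f

noncomputable def shadedRookPoly (m j : ℕ) : ℤ[X] :=
  ∑ f ∈ ShadedRooks m j, rookWeight f

theorem mem_shadedRooks {m j : ℕ} {f : Fin (m - 1) → Fin m} :
    f ∈ ShadedRooks m j ↔ (∀ c, (f c : ℕ) ≤ m - 1 - c) ∧ #{c | (f c : ℕ) ≠ 0} = j ∧
      ∀ c, (f c : ℕ) ≠ 0 → Even ((f c : ℕ) - 1) := by
  simp [ShadedRooks, Rooks, and_assoc]

theorem shadedRooks_zero (m : ℕ) :
    ShadedRooks m 0 = {fun c => ⟨0, by have := c.isLt; omega⟩} := by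
  ext f
  simp only [mem_shadedRooks, card_eq_zero, filter_eq_empty_iff, mem_univ, true_implies,
    not_not, mem_singleton, funext_iff, Fin.ext_iff]
  constructor
  · exact fun h => h.2.1
  · intro h
    simp [h]

theorem shadedRookPoly_zero (m : ℕ) : shadedRookPoly m 0 = 1 := by
  simp [shadedRookPoly, shadedRooks_zero, rookWeight, rbelow, nrow]

theorem shadedRookPoly_eq_zero_of_lt {m j : ℕ} (h : m - 1 < j) : shadedRookPoly m j = 0 := by
  refine sum_eq_zero fun f hf => absurd ((mem_shadedRooks.1 hf).2.1 ▸ card_filter_le _ _) ?_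
  simpa using h

section consColumn

variable {p : ℕ}

def consColumn (v : Fin (p + 2)) (g : Fin p → Fin (p + 1)) : Fin (p + 1) → Fin (p + 2) :=
  Fin.cons v (Fin.castSucc ∘ g)

@[simp]
theorem consColumn_zero (v : Fin (p + 2)) (g : Fin p → Fin (p + 1)) : consColumn v g 0 = v := rfl

@[simp]
theorem val_consColumn_succ (v : Fin (p + 2)) (g : Fin p → Fin (p + 1)) (c : Fin p) :
    (consColumn v g c.succ : ℕ) = g c := by
  simp [consColumn]

theorem consColumn_injective :
    Function.Injective fun x : Fin (p + 2) × (Fin p → Fin (p + 1)) => consColumn x.1 x.2 := by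
  rintro ⟨v, g⟩ ⟨w, h⟩ hvg
  obtain ⟨rfl, hgh⟩ := Fin.cons_inj.1 hvg
  exact Prod.ext rfl ((Fin.castSucc_injective _).comp_left hgh)

theorem exists_consColumn_eq {f : Fin (p + 1) → Fin (p + 2)}
    (hf : ∀ c, (f c : ℕ) ≤ p + 2 - 1 - c) :
    ∃ x : Fin (p + 2) × (Fin p → Fin (p + 1)), consColumn x.1 x.2 = f := by
  refine ⟨(f 0, fun c => (f c.succ).castLT ?_), ?_⟩
  · have := hf c.succ
    simp only [Fin.val_succ] at this
    omega
  · ext c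
    cases c using Fin.cases <;> simp

theorem rookWeight_consColumn (v : Fin (p + 2)) (g : Fin p → Fin (p + 1)) :
    rookWeight (m := p + 2) (consColumn v g) =
      X ^ ((v : ℕ) - 1) * (1 + X) ^ (if (v : ℕ) ≠ 0 ∧ (v : ℕ) ≠ p + 1 then 1 else 0) *
        rookWeight (m := p + 1) g := by
  have hrbelow : rbelow (m := p + 2) (consColumn v g) = ((v : ℕ) - 1) + rbelow (m := p + 1) g := by
    simp [rbelow, Fin.sum_univ_succ]
  have hnrow : nrow (m := p + 2) (consColumn v g) =
      (if (v : ℕ) ≠ 0 ∧ (v : ℕ) ≠ p + 1 then 1 else 0) + nrow (m := p + 1) g := by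
    change #{c : Fin (p + 1) | _} = _ + #{c : Fin p | _}
    simp only [card_filter, Fin.sum_univ_succ]
    simp
  rw [rookWeight, rookWeight, hrbelow, hnrow, pow_add, pow_add]
  ring

theorem consColumn_zero_mem_shadedRooks {J : ℕ} (g : Fin p → Fin (p + 1)) :
    consColumn 0 g ∈ ShadedRooks (p + 2) J ↔ g ∈ ShadedRooks (p + 1) J := by
  rw [mem_shadedRooks, mem_shadedRooks, card_filter, card_filter]
  change (∀ c : Fin (p + 1), _) ∧ ∑ c : Fin (p + 1), _ = J ∧ (∀ c : Fin (p + 1), _) ↔ _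
  simp only [Fin.sum_univ_succ, Fin.forall_fin_succ]
  simp

theorem consColumn_succ_mem_shadedRooks {j : ℕ} (b : Fin (p + 1)) (g : Fin p → Fin (p + 1)) :
    consColumn b.succ g ∈ ShadedRooks (p + 2) (j + 1) ↔ Even (b : ℕ) ∧ g ∈ ShadedRooks (p + 1) j := by
  rw [mem_shadedRooks, mem_shadedRooks, card_filter, card_filter]
  change (∀ c : Fin (p + 1), _) ∧ ∑ c : Fin (p + 1), _ = j + 1 ∧ (∀ c : Fin (p + 1), _) ↔ _
  simp only [Fin.sum_univ_succ, Fin.forall_fin_succ]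
  simp [b.is_le, add_comm 1]
  tauto

end consColumn

theorem shadedRookPoly_add_two_succ (p j : ℕ) :
    shadedRookPoly (p + 2) (j + 1) =
      shadedRookPoly (p + 1) (j + 1) + (∑ i ∈ range (p + 1), X ^ i) * shadedRookPoly (p + 1) j := by
  have hcons : shadedRookPoly (p + 2) (j + 1) = ∑ x : Fin (p + 2) × (Fin p → Fin (p + 1)),
      if consColumn x.1 x.2 ∈ ShadedRooks (p + 2) (j + 1) then
        rookWeight (m := p + 2) (consColumn x.1 x.2) else 0 := by
    rw [shadedRookPoly, ← Fintype.sum_ite_mem]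
    refine (Fintype.sum_of_injective _ consColumn_injective _ _ (fun f hf => ?_) fun _ => rfl).symm
    refine if_neg fun hmem => hf ?_
    exact exists_consColumn_eq (mem_shadedRooks.1 hmem).1
  have hcolumn : ∑ b : Fin (p + 1),
      (if Even (b : ℕ) then X ^ (b : ℕ) * (1 + X) ^ (if (b : ℕ) = p then 0 else 1) else 0) =
        ∑ i ∈ range (p + 1), (X : ℤ[X]) ^ i := by
    have hlt (i : Fin p) : (i : ℕ) ≠ p := i.isLt.ne
    rw [← sum_range_ite_even_pow_mul_add, Fin.sum_univ_castSucc]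
    simp [hlt, Fin.sum_univ_eq_sum_range (fun b => if Even b then (X : ℤ[X]) ^ b * (1 + X) else 0)]
  rw [hcons, Fintype.sum_prod_type, Fin.sum_univ_succ]
  simp only [consColumn_zero_mem_shadedRooks, consColumn_succ_mem_shadedRooks,
    rookWeight_consColumn, Fin.val_zero, Fin.val_succ, ← ite_zero_mul_ite_zero, ← sum_mul_sum,
    Fintype.sum_ite_mem]
  rw [← hcolumn, shadedRookPoly, shadedRookPoly]
  simp [ite_not]

theorem cq_eq_zero_of_lt {n k : ℕ} (h : n < k) : cq n k = 0 := by
  induction n generalizing k with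
  | zero => obtain ⟨k, rfl⟩ := Nat.exists_eq_add_of_lt h; rfl
  | succ n ih =>
    obtain ⟨k, rfl⟩ := Nat.exists_eq_succ_of_ne_zero (by omega : k ≠ 0)
    rw [cq, ih (by omega), ih (by omega), mul_zero, add_zero]

theorem cq_eq_shadedRookPoly {n k : ℕ} (hk : k ≤ n) : cq n k = shadedRookPoly n (n - k) := by
  induction n generalizing k with
  | zero =>
    obtain rfl : k = 0 := by omega
    rw [shadedRookPoly_zero]
    rfl
  | succ n ih =>
    rcases k with _ | k
    · exact (shadedRookPoly_eq_zero_of_lt (by omega)).symm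
    rw [cq]
    rcases (Nat.lt_or_eq_of_le (Nat.le_of_succ_le_succ hk)) with hlt | rfl
    · obtain ⟨p, rfl⟩ : ∃ p, n = p + 1 := ⟨n - 1, by omega⟩
      rw [ih (by omega), ih hlt, show p + 1 + 1 - (k + 1) = p - k + 1 by omega,
        shadedRookPoly_add_two_succ, show p + 1 - k = p - k + 1 by omega,
        show p + 1 - (k + 1) = p - k by omega]
    · rw [ih le_rfl, cq_eq_zero_of_lt (Nat.lt_succ_self _), Nat.sub_self, Nat.sub_self,
        shadedRookPoly_zero, shadedRookPoly_zero, mul_zero, add_zero]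

theorem cq_eq_sum_shaded_rooks (n k : ℕ) (hk : k ≤ n) :
    cq n k = ∑ f ∈ ShadedRooks n (n - k), X ^ rbelow f * (1 + X) ^ nrow f :=
  cq_eq_shadedRookPoly hk
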